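/- Let ε_small > 0 and ε_cell ∈ (0,1] with 1/ε_cell ∈ ℕ, and consider the grid cells, i.e., the closed squares [ℓ·ε_cell, (ℓ+1)·ε_cell] × [ℓ'·ε_cell, (ℓ'+1)·ε_cell] for ℓ,ℓ' ∈ {0,…,1/ε_cell − 1}. Let D be a finite family of pairwise disjoint closed Euclidean disks contained in [0,1]², each of radius at most ε_small. Then the total area of those disks in D that are not contained in a single grid cell is at most 8·ε_small/ε_cell. In particular, if ε_small = ε_large^{24} and ε_cell = ε_large^{12} for some 0 < ε_large ≤ ε ≤ 1/2, this total area is at most ε·ε_large²/64. -/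

import Mathlib

open Metric Set
open scoped Classical

noncomputable section

/-- The plane ℝ² with the Euclidean metric. -/
abbrev Plane := EuclideanSpace ℝ (Fin 2)

/-- The unit square `[0,1] × [0,1]` in the plane. -/
def unitSquare : Set Plane := {x | x 0 ∈ Icc (0:ℝ) 1 ∧ x 1 ∈ Icc (0:ℝ) 1}

/-- The grid cell `[ℓ·εc,(ℓ+1)·εc] × [ℓ'·εc,(ℓ'+1)·εc]`. -/
def gridCell (εc : ℝ) (ℓ ℓ' : ℕ) : Set Plane :=
  {x | x 0 ∈ Icc ((ℓ : ℝ) * εc) (((ℓ : ℝ) + 1) * εc) ∧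
       x 1 ∈ Icc ((ℓ' : ℝ) * εc) (((ℓ' : ℝ) + 1) * εc)}

open MeasureTheory

lemma aux_coord_abs_le_dist (x y : Plane) (j : Fin 2) : |x j - y j| ≤ dist x y := by
  rw [EuclideanSpace.dist_eq]
  have h1 : dist (x j) (y j) ^ 2 ≤ ∑ i, dist (x i) (y i) ^ 2 :=
    Finset.single_le_sum (f := fun i => dist (x i) (y i) ^ 2)
      (fun i _ => sq_nonneg _) (Finset.mem_univ j)
  calc |x j - y j| = Real.sqrt (dist (x j) (y j) ^ 2) := by
        rw [Real.sqrt_sq dist_nonneg, Real.dist_eq]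
    _ ≤ _ := Real.sqrt_le_sqrt h1

lemma aux_volume_planeBox (a b c d : ℝ) :
    volume {x : Plane | x 0 ∈ Icc a b ∧ x 1 ∈ Icc c d}
      = ENNReal.ofReal (b - a) * ENNReal.ofReal (d - c) := by
  have hset : {x : Plane | x 0 ∈ Icc a b ∧ x 1 ∈ Icc c d}
      = (MeasurableEquiv.toLp 2 (Fin 2 → ℝ)).symm ⁻¹'
        (Set.univ.pi ![Icc a b, Icc c d]) := by
    ext x
    simp [Set.mem_pi, Fin.forall_fin_two]
  rw [hset, (EuclideanSpace.volume_preserving_symm_measurableEquiv_toLp (Fin 2)).measure_preimage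
    ((MeasurableSet.univ_pi (by
      intro i; fin_cases i <;> simp [measurableSet_Icc])).nullMeasurableSet)]
  rw [volume_pi_pi]
  simp [Fin.prod_univ_two, Real.volume_Icc]

lemma aux_volume_planeBall (c : Plane) (r : ℝ) (hr : 0 ≤ r) :
    volume (closedBall c r) = ENNReal.ofReal (Real.pi * r ^ 2) := by
  rw [EuclideanSpace.volume_closedBall]
  simp only [Fintype.card_fin]
  rw [show ((2:ℕ):ℝ)/2 + 1 = 2 by norm_num, Real.Gamma_two,
    Real.sq_sqrt Real.pi_nonneg, ← ENNReal.ofReal_pow hr, ← ENNReal.ofReal_mul (by positivity)]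
  ring_nf

lemma aux_coord_pm (c : Plane) (r : ℝ) (hr : 0 ≤ r) (j : Fin 2)
    (h : closedBall c r ⊆ unitSquare) :
    0 ≤ c j - r ∧ c j + r ≤ 1 := by
  have key : ∀ t : ℝ, |t| ≤ r → c j + t ∈ Icc (0:ℝ) 1 := by
    intro t ht
    set p : Plane := c + t • EuclideanSpace.single j (1:ℝ) with hp
    have hpball : p ∈ closedBall c r := by
      rw [mem_closedBall, dist_eq_norm, hp, add_sub_cancel_left, norm_smul,
        EuclideanSpace.norm_single]
      simpa using ht
    have hpj : p j = c j + t := by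
      simp [hp, EuclideanSpace.single_apply]
    have := h hpball
    rw [← hpj]
    fin_cases j
    · exact this.1
    · exact this.2
  constructor
  · have := (key (-r) (by simp [abs_of_nonneg hr])).1; linarith
  · have := (key r (by simp [abs_of_nonneg hr])).2; linarith

lemma aux_oneD (εc : ℝ) (hεc0 : 0 < εc) (M : ℕ) (hMεc : (M:ℝ) * εc = 1)
    (a b : ℝ) (h0a : 0 ≤ a) (hab : a ≤ b) (hb1 : b ≤ 1)
    (h : ∀ k : ℕ, 1 ≤ k → k < M → (k:ℝ) * εc ∉ Icc a b) :
    ∃ ℓ : ℕ, ℓ < M ∧ (ℓ:ℝ) * εc ≤ a ∧ b ≤ ((ℓ:ℝ) + 1) * εc := by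
  have hM1 : 1 ≤ M := by
    by_contra hM0
    interval_cases M
    simp at hMεc
  set ℓ : ℕ := min ⌊a / εc⌋₊ (M - 1) with hℓ
  have hℓM : ℓ < M := lt_of_le_of_lt (min_le_right _ _) (by omega)
  have hfloor_le : (⌊a / εc⌋₊ : ℝ) ≤ a / εc := Nat.floor_le (by positivity)
  have hla : (ℓ:ℝ) * εc ≤ a := by
    rcases min_cases ⌊a / εc⌋₊ (M - 1) with ⟨hmin, _⟩ | ⟨hmin, hlt⟩
    · rw [hℓ, hmin]
      calc (⌊a / εc⌋₊ : ℝ) * εc ≤ (a / εc) * εc := by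
            exact mul_le_mul_of_nonneg_right hfloor_le hεc0.le
        _ = a := by field_simp
    · rw [hℓ, hmin]
      have h1 : ((M:ℝ) - 1) * εc ≤ 1 - εc := by nlinarith
      have hMfloor : (M:ℝ) ≤ ⌊a / εc⌋₊ := by
        have : M ≤ ⌊a / εc⌋₊ := by omega
        exact_mod_cast this
      have ha1 : 1 ≤ a := by
        have := hMfloor.trans hfloor_le
        calc (1:ℝ) = M * εc := hMεc.symm
          _ ≤ (a / εc) * εc := by nlinarith
          _ = a := by field_simp
      have : ((M - 1 : ℕ) : ℝ) = (M:ℝ) - 1 := by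
        push_cast [Nat.cast_sub hM1]; ring
      rw [this]; nlinarith
  refine ⟨ℓ, hℓM, hla, ?_⟩
  by_contra hb'
  push_neg at hb'
  have hℓ1M : ℓ + 1 ≤ M := hℓM
  rcases eq_or_lt_of_le hℓ1M with heq | hlt
  · have : ((ℓ:ℝ) + 1) * εc = 1 := by
      rw [show ((ℓ:ℝ) + 1) = ((ℓ + 1 : ℕ):ℝ) by push_cast; ring, heq]; exact hMεc
    linarith
  · apply h (ℓ + 1) (by omega) hlt
    constructor
    · have hℓeq : ℓ = ⌊a / εc⌋₊ := by
        rcases min_cases ⌊a / εc⌋₊ (M - 1) with ⟨hmin, _⟩ | ⟨hmin, _⟩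
        · rw [hℓ, hmin]
        · exfalso; omega
      have hlt' : a / εc < (ℓ:ℝ) + 1 := by
        have := Nat.lt_floor_add_one (a / εc)
        rw [hℓeq]; push_cast at this ⊢; linarith
      have := (div_lt_iff₀ hεc0).mp hlt'
      push_cast; linarith
    · push_cast; linarith

/-- Bound on the total area of small circles cut by the grid (Lemma 3.5): for pairwise
disjoint closed disks in the unit square of radius at most `ε_small`, the total area
(each disk of radius `rᵢ` having area `π rᵢ²`) of the disks not contained in a single
grid cell of the `ε_cell`-grid is at most `8·ε_small/ε_cell`; in particular, if
`ε_small = ε_large^24` and `ε_cell = ε_large^12` with `0 < ε_large ≤ ε ≤ 1/2`, this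
total area is at most `ε·ε_large²/64`. -/
theorem area_of_cut_small_disks
    (εs εc : ℝ) (hεs : 0 < εs) (hεc0 : 0 < εc) (hεc1 : εc ≤ 1)
    (M : ℕ) (hM : (M : ℝ) = 1 / εc)
    (n : ℕ) (c : Fin n → Plane) (r : Fin n → ℝ)
    (hr0 : ∀ i, 0 ≤ r i) (hrs : ∀ i, r i ≤ εs)
    (hdisj : ∀ i j, i ≠ j →
      Disjoint (closedBall (c i) (r i)) (closedBall (c j) (r j)))
    (hsub : ∀ i, closedBall (c i) (r i) ⊆ unitSquare) :
    (∑ i ∈ Finset.univ.filter (fun i : Fin n =>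
        ¬ ∃ ℓ ℓ' : ℕ, ℓ < M ∧ ℓ' < M ∧ closedBall (c i) (r i) ⊆ gridCell εc ℓ ℓ'),
      Real.pi * r i ^ 2) ≤ 8 * εs / εc ∧
    (∀ εlarge ε : ℝ, 0 < εlarge → εlarge ≤ ε → ε ≤ 1/2 →
      εs = εlarge ^ 24 → εc = εlarge ^ 12 →
      (∑ i ∈ Finset.univ.filter (fun i : Fin n =>
          ¬ ∃ ℓ ℓ' : ℕ, ℓ < M ∧ ℓ' < M ∧ closedBall (c i) (r i) ⊆ gridCell εc ℓ ℓ'),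
        Real.pi * r i ^ 2) ≤ ε * εlarge ^ 2 / 64) := by
  have hMεc : (M:ℝ) * εc = 1 := by rw [hM]; field_simp
  set T := Finset.univ.filter (fun i : Fin n =>
      ¬ ∃ ℓ ℓ' : ℕ, ℓ < M ∧ ℓ' < M ∧ closedBall (c i) (r i) ⊆ gridCell εc ℓ ℓ') with hT
  -- every cut disk is close to a grid line
  have hkey : ∀ i ∈ T, ∃ k : ℕ, 1 ≤ k ∧ k < M ∧
      (|c i 0 - (k:ℝ) * εc| ≤ r i ∨ |c i 1 - (k:ℝ) * εc| ≤ r i) := by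
    intro i hi
    rw [hT, Finset.mem_filter] at hi
    by_contra hno
    push_neg at hno
    have hpm0 := aux_coord_pm (c i) (r i) (hr0 i) 0 (hsub i)
    have hpm1 := aux_coord_pm (c i) (r i) (hr0 i) 1 (hsub i)
    obtain ⟨ℓ, hℓM, hℓa, hℓb⟩ := aux_oneD εc hεc0 M hMεc (c i 0 - r i) (c i 0 + r i)
      hpm0.1 (by linarith [hr0 i]) hpm0.2 (by
        intro k hk1 hkM hkmem
        have := (hno k hk1 hkM).1
        rw [mem_Icc] at hkmem
        have : |c i 0 - (k:ℝ) * εc| ≤ r i := abs_le.mpr ⟨by linarith, by linarith⟩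
        exact absurd this (not_le.mpr (hno k hk1 hkM).1))
    obtain ⟨ℓ', hℓ'M, hℓ'a, hℓ'b⟩ := aux_oneD εc hεc0 M hMεc (c i 1 - r i) (c i 1 + r i)
      hpm1.1 (by linarith [hr0 i]) hpm1.2 (by
        intro k hk1 hkM hkmem
        rw [mem_Icc] at hkmem
        have : |c i 1 - (k:ℝ) * εc| ≤ r i := abs_le.mpr ⟨by linarith, by linarith⟩
        exact absurd this (not_le.mpr (hno k hk1 hkM).2))
    apply hi.2
    refine ⟨ℓ, ℓ', hℓM, hℓ'M, ?_⟩
    intro x hx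
    rw [mem_closedBall] at hx
    have h0 := abs_le.mp ((aux_coord_abs_le_dist x (c i) 0).trans hx)
    have h1 := abs_le.mp ((aux_coord_abs_le_dist x (c i) 1).trans hx)
    exact ⟨⟨by linarith, by linarith⟩, ⟨by linarith, by linarith⟩⟩
  -- the strips
  set B0 : ℕ → Set Plane := fun k =>
    {x | x 0 ∈ Icc ((k:ℝ) * εc - 2 * εs) ((k:ℝ) * εc + 2 * εs) ∧ x 1 ∈ Icc (0:ℝ) 1} with hB0
  set B1 : ℕ → Set Plane := fun k =>
    {x | x 0 ∈ Icc (0:ℝ) 1 ∧ x 1 ∈ Icc ((k:ℝ) * εc - 2 * εs) ((k:ℝ) * εc + 2 * εs)} with hB1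
  set U : Set Plane := ⋃ k ∈ Finset.Ico 1 M, (B0 k ∪ B1 k) with hU
  have hsubU : ∀ i ∈ T, closedBall (c i) (r i) ⊆ U := by
    intro i hi x hx
    obtain ⟨k, hk1, hkM, hcase⟩ := hkey i hi
    have hxsq := hsub i hx
    rw [mem_closedBall] at hx
    have h0 := abs_le.mp ((aux_coord_abs_le_dist x (c i) 0).trans hx)
    have h1 := abs_le.mp ((aux_coord_abs_le_dist x (c i) 1).trans hx)
    have hrs' := hrs i
    rw [hU]
    simp only [Set.mem_iUnion]
    refine ⟨k, Finset.mem_Ico.mpr ⟨hk1, hkM⟩, ?_⟩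
    rcases hcase with hc | hc
    · left
      have := abs_le.mp hc
      exact ⟨⟨by linarith, by linarith⟩, hxsq.2⟩
    · right
      have := abs_le.mp hc
      exact ⟨hxsq.1, ⟨by linarith, by linarith⟩⟩
  -- measure computation
  have hmain : (∑ i ∈ T, Real.pi * r i ^ 2) ≤ 8 * εs / εc := by
    rw [← ENNReal.ofReal_le_ofReal_iff (by positivity)]
    rw [ENNReal.ofReal_sum_of_nonneg (fun i _ => by positivity)]
    calc ∑ i ∈ T, ENNReal.ofReal (Real.pi * r i ^ 2)
        = ∑ i ∈ T, volume (closedBall (c i) (r i)) :=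
          Finset.sum_congr rfl fun i _ => (aux_volume_planeBall _ _ (hr0 i)).symm
      _ = volume (⋃ i ∈ T, closedBall (c i) (r i)) :=
          (measure_biUnion_finset (fun i _ j _ hij => hdisj i j hij)
            (fun i _ => measurableSet_closedBall)).symm
      _ ≤ volume U := measure_mono (Set.iUnion₂_subset hsubU)
      _ ≤ ∑ k ∈ Finset.Ico 1 M, volume (B0 k ∪ B1 k) := measure_biUnion_finset_le _ _
      _ ≤ ∑ k ∈ Finset.Ico 1 M, (volume (B0 k) + volume (B1 k)) :=
          Finset.sum_le_sum fun k _ => measure_union_le _ _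
      _ = ∑ _k ∈ Finset.Ico 1 M, ENNReal.ofReal (8 * εs) := by
          refine Finset.sum_congr rfl fun k _ => ?_
          rw [hB0, hB1]
          simp only
          rw [aux_volume_planeBox, aux_volume_planeBox]
          rw [show ((k:ℝ) * εc + 2 * εs) - ((k:ℝ) * εc - 2 * εs) = 4 * εs by ring]
          rw [show (1:ℝ) - 0 = 1 by ring]
          rw [ENNReal.ofReal_one, mul_one, one_mul, ← ENNReal.ofReal_add (by positivity)
            (by positivity)]
          congr 1; ring
      _ = ((M - 1 : ℕ) : ENNReal) * ENNReal.ofReal (8 * εs) := by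
          rw [Finset.sum_const, Nat.card_Ico, nsmul_eq_mul]
      _ ≤ (M : ENNReal) * ENNReal.ofReal (8 * εs) := by
          exact mul_le_mul_left (by exact_mod_cast Nat.cast_le.mpr (Nat.sub_le M 1)) _
      _ = ENNReal.ofReal (8 * εs / εc) := by
          rw [← ENNReal.ofReal_natCast, ← ENNReal.ofReal_mul (by positivity)]
          congr 1
          rw [hM]; field_simp
  refine ⟨hmain, ?_⟩
  intro εl ε h0 h1 h2 hεsq hεcq
  calc (∑ i ∈ T, Real.pi * r i ^ 2) ≤ 8 * εs / εc := hmain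
    _ ≤ ε * εl ^ 2 / 64 := by
        rw [hεsq, hεcq]
        have hE : 8 * εl ^ 24 / εl ^ 12 = 8 * εl ^ 12 := by
          field_simp
        rw [hE]
        have h9 : εl ^ 9 ≤ (1/2:ℝ) ^ 9 := pow_le_pow_left₀ h0.le (h1.trans h2) 9
        have h10 : εl ^ 9 * εl ≤ (1/2:ℝ) ^ 9 * ε :=
          mul_le_mul h9 h1 h0.le (by norm_num)
        nlinarith [mul_le_mul_of_nonneg_right h10 (sq_nonneg εl)]

end
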